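/- Subspace-constrained Gromov–Wasserstein with inner-product loss is invariant under linear isometries of E⊥: with L(x,x',y,y') = (⟨x,x'⟩ − ⟨y,y'⟩)² and f(x) = (x_E, O x_{E⊥}) for O an orthogonal transformation of E⊥, GW_{E,F}(f_#μ, ν) = GW_{E,F}(μ, ν). -/

import Mathlib

open MeasureTheory
open scoped ENNReal RealInnerProductSpace

/-- The subspace-constrained Gromov–Wasserstein value with inner-product loss:
infimum of `∬ (⟨x,x'⟩ − ⟨y,y'⟩)² dγ dγ` over couplings `γ` of `μ` and `ν` whose
pushforward by `(π^E, π^F)` equals the fixed plan `γstar`. -/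
noncomputable def GWEFinner {p q : ℕ}
    (E : Submodule ℝ (EuclideanSpace ℝ (Fin p)))
    (F : Submodule ℝ (EuclideanSpace ℝ (Fin q)))
    (γstar : Measure (↥E × ↥F))
    (μ : Measure (EuclideanSpace ℝ (Fin p))) (ν : Measure (EuclideanSpace ℝ (Fin q))) :
    ℝ≥0∞ :=
  sInf ((fun γ : Measure (EuclideanSpace ℝ (Fin p) × EuclideanSpace ℝ (Fin q)) =>
      ∫⁻ w, ENNReal.ofReal ((⟪w.1.1, w.2.1⟫ - ⟪w.1.2, w.2.2⟫) ^ 2) ∂(γ.prod γ)) ''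
    {γ | (γ.map Prod.fst = μ ∧ γ.map Prod.snd = ν) ∧
      γ.map (fun w => (Submodule.orthogonalProjectionOnto E w.1, Submodule.orthogonalProjectionOnto F w.2)) = γstar})

section Aux
variable {p : ℕ} (E : Submodule ℝ (EuclideanSpace ℝ (Fin p)))

lemma aux_props (O : ↥Eᗮ ≃ₗᵢ[ℝ] ↥Eᗮ)
    (f : EuclideanSpace ℝ (Fin p) → EuclideanSpace ℝ (Fin p))
    (hf : ∀ x, f x = (Submodule.orthogonalProjectionOnto E x : EuclideanSpace ℝ (Fin p)) +
        (O (Submodule.orthogonalProjectionOnto Eᗮ x) : EuclideanSpace ℝ (Fin p))) :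
    (∀ x, Submodule.orthogonalProjectionOnto E (f x) = Submodule.orthogonalProjectionOnto E x) ∧
    (∀ x, Submodule.orthogonalProjectionOnto Eᗮ (f x) = O (Submodule.orthogonalProjectionOnto Eᗮ x)) ∧
    (∀ x x', ⟪f x, f x'⟫ = ⟪x, x'⟫) ∧ Measurable f := by
  have key : ∀ (u u' : ↥E) (v v' : ↥Eᗮ),
      ⟪(u : EuclideanSpace ℝ (Fin p)) + v, (u' : EuclideanSpace ℝ (Fin p)) + v'⟫
        = ⟪(u : EuclideanSpace ℝ (Fin p)), (u' : EuclideanSpace ℝ (Fin p))⟫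
          + ⟪(v : EuclideanSpace ℝ (Fin p)), (v' : EuclideanSpace ℝ (Fin p))⟫ := by
    intro u u' v v'
    rw [inner_add_left, inner_add_right, inner_add_right,
      Submodule.inner_right_of_mem_orthogonal u.2 v'.2,
      Submodule.inner_left_of_mem_orthogonal u'.2 v.2]
    ring
  refine ⟨fun x => ?_, fun x => ?_, fun x x' => ?_, ?_⟩
  · rw [hf, map_add, Submodule.orthogonalProjectionOnto_mem_subspace_eq_self,
      Submodule.orthogonalProjectionOnto_apply_of_mem_orthogonal (O _).2, add_zero]
  · rw [hf, map_add,
      Submodule.orthogonalProjectionOnto_orthogonal_apply_eq_zero (Submodule.orthogonalProjectionOnto E x).2,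
      Submodule.orthogonalProjectionOnto_mem_subspace_eq_self, zero_add]
  · rw [hf, hf, key]
    conv_rhs => rw [← Submodule.starProjection_add_starProjection_orthogonal (K := E) x,
      ← Submodule.starProjection_add_starProjection_orthogonal (K := E) x']
    simp only [Submodule.starProjection_apply]
    rw [key]
    congr 1
    rw [← Submodule.coe_inner, ← Submodule.coe_inner, O.inner_map_map]
  · have : Continuous f := by
      have : Continuous fun x => ((Submodule.orthogonalProjectionOnto E x : EuclideanSpace ℝ (Fin p)) +
          (O (Submodule.orthogonalProjectionOnto Eᗮ x) : EuclideanSpace ℝ (Fin p))) := by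
        exact continuous_subtype_val.comp ((Submodule.orthogonalProjectionOnto E).continuous) |>.add
          (continuous_subtype_val.comp (O.continuous.comp (Submodule.orthogonalProjectionOnto Eᗮ).continuous))
      simpa only [← hf] using this
    exact this.measurable

end Aux

lemma GWEFinner_map_le {p q : ℕ} (E : Submodule ℝ (EuclideanSpace ℝ (Fin p)))
    (F : Submodule ℝ (EuclideanSpace ℝ (Fin q)))
    (γstar : Measure (↥E × ↥F))
    (μ : Measure (EuclideanSpace ℝ (Fin p))) (ν : Measure (EuclideanSpace ℝ (Fin q)))
    [IsProbabilityMeasure μ]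
    (f : EuclideanSpace ℝ (Fin p) → EuclideanSpace ℝ (Fin p)) (hfm : Measurable f)
    (hproj : ∀ x, Submodule.orthogonalProjectionOnto E (f x) = Submodule.orthogonalProjectionOnto E x)
    (hinner : ∀ x x', ⟪f x, f x'⟫ = ⟪x, x'⟫) :
    GWEFinner E F γstar (μ.map f) ν ≤ GWEFinner E F γstar μ ν := by
  apply sInf_le_sInf
  rintro c ⟨γ, ⟨⟨h1, h2⟩, h3⟩, rfl⟩
  haveI : IsProbabilityMeasure γ := by
    constructor
    have := congrArg (fun m : Measure (EuclideanSpace ℝ (Fin p)) => m Set.univ) h1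
    simp only [Measure.map_apply measurable_fst MeasurableSet.univ, Set.preimage_univ] at this
    rw [this]; exact measure_univ
  have hg : Measurable (Prod.map f (id : EuclideanSpace ℝ (Fin q) → _)) :=
    hfm.prodMap measurable_id
  have hcost : Measurable (fun w : (EuclideanSpace ℝ (Fin p) × EuclideanSpace ℝ (Fin q)) ×
      (EuclideanSpace ℝ (Fin p) × EuclideanSpace ℝ (Fin q)) =>
      ENNReal.ofReal ((⟪w.1.1, w.2.1⟫ - ⟪w.1.2, w.2.2⟫) ^ 2)) := by
    apply Measurable.ennreal_ofReal
    apply Measurable.pow_const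
    exact (measurable_fst.fst.inner measurable_snd.fst).sub
      (measurable_fst.snd.inner measurable_snd.snd)
  have hprojm : Measurable (fun w : EuclideanSpace ℝ (Fin p) × EuclideanSpace ℝ (Fin q) =>
      (Submodule.orthogonalProjectionOnto E w.1, Submodule.orthogonalProjectionOnto F w.2)) :=
    (((Submodule.orthogonalProjectionOnto E).continuous.comp continuous_fst).prodMk
      ((Submodule.orthogonalProjectionOnto F).continuous.comp continuous_snd)).measurable
  refine ⟨γ.map (Prod.map f id), ⟨⟨?_, ?_⟩, ?_⟩, ?_⟩
  · rw [Measure.map_map measurable_fst hg, ← h1, Measure.map_map hfm measurable_fst]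
    rfl
  · rw [Measure.map_map measurable_snd hg]
    exact h2
  · rw [Measure.map_map hprojm hg, ← h3]
    congr 1
    funext w
    simp [Prod.map, hproj]
  · dsimp only
    rw [Measure.map_prod_map γ γ hg hg, lintegral_map hcost (hg.prodMap hg)]
    congr 1
    funext w
    simp [Prod.map, hinner]


/-- Subspace-constrained Gromov–Wasserstein with inner-product loss is invariant under
`f(x) = (x_E, O x_{E⊥})` with `O` a linear isometry of `E⊥`. -/
theorem GWEFinner_linear_isometry_invariant {p q : ℕ}
    (E : Submodule ℝ (EuclideanSpace ℝ (Fin p)))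
    (F : Submodule ℝ (EuclideanSpace ℝ (Fin q)))
    (μ : Measure (EuclideanSpace ℝ (Fin p))) (ν : Measure (EuclideanSpace ℝ (Fin q)))
    [IsProbabilityMeasure μ] [IsProbabilityMeasure ν]
    (hμ : ∃ K : Set (EuclideanSpace ℝ (Fin p)), IsCompact K ∧ μ Kᶜ = 0)
    (hν : ∃ K : Set (EuclideanSpace ℝ (Fin q)), IsCompact K ∧ ν Kᶜ = 0)
    (γstar : Measure (↥E × ↥F))
    (O : ↥Eᗮ ≃ₗᵢ[ℝ] ↥Eᗮ)
    (f : EuclideanSpace ℝ (Fin p) → EuclideanSpace ℝ (Fin p))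
    (hf : ∀ x, f x = (Submodule.orthogonalProjectionOnto E x : EuclideanSpace ℝ (Fin p)) +
        (O (Submodule.orthogonalProjectionOnto Eᗮ x) : EuclideanSpace ℝ (Fin p))) :
    GWEFinner E F γstar (μ.map f) ν = GWEFinner E F γstar μ ν := by
  obtain ⟨h1f, h2f, h3f, hfm⟩ := aux_props E O f hf
  set g : EuclideanSpace ℝ (Fin p) → EuclideanSpace ℝ (Fin p) := fun x =>
    (Submodule.orthogonalProjectionOnto E x : EuclideanSpace ℝ (Fin p)) +
    (O.symm (Submodule.orthogonalProjectionOnto Eᗮ x) : EuclideanSpace ℝ (Fin p)) with hgdef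
  obtain ⟨h1g, h2g, h3g, hgm⟩ := aux_props E O.symm g (fun x => rfl)
  have hgf : ∀ x, g (f x) = x := by
    intro x
    rw [hgdef]
    simp only [h1f, h2f, LinearIsometryEquiv.symm_apply_apply]
    simpa only [Submodule.starProjection_apply] using
      Submodule.starProjection_add_starProjection_orthogonal (K := E) x
  have hmap : (μ.map f).map g = μ := by
    rw [Measure.map_map hgm hfm]
    have : g ∘ f = id := funext hgf
    rw [this, Measure.map_id]
  haveI : IsProbabilityMeasure (μ.map f) := Measure.isProbabilityMeasure_map hfm.aemeasurable
  apply le_antisymm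
  · exact GWEFinner_map_le E F γstar μ ν f hfm h1f h3f
  · have := GWEFinner_map_le E F γstar (μ.map f) ν g hgm h1g h3g
    rwa [hmap] at this
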